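/- arXiv:math/0012135 — 2 statements merged into one kernel-verified Lean document; each statement's English description precedes it below -/
import Mathlib

section
/- Let K be a discrete valuation field with valuation v and residue characteristic p > 0, with e = v(p) < ∞. Let e' = pe/(p−1). If m > e' then every element of 1 + M^m is a p-th power in K*, provided K is henselian. Consequently the image of 1 + M^m in K*/(K*)^p is trivial for m > e'. -/
/-!
Write `x = ϖ ^ m * u` with `u` a unit and `p = ϖ ^ e * c`, and put `k = m - e`. We look for a
`p`-th root of `1 + x` of the form `(t + ϖ ^ k) / t` with `t` a unit. Dividing
`(t + ϖ ^ k) ^ p = t ^ p * (1 + ϖ ^ m * u)` by `ϖ ^ m` turns it into `u * t ^ p = Q(t)` with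
`Q ≡ c * X ^ (p - 1)` modulo the maximal ideal: the term `p * ϖ ^ k * t ^ (p - 1)` is
`c * ϖ ^ m * t ^ (p - 1)`, the other middle binomial terms are divisible by
`p * ϖ ^ (2k) = c * ϖ ^ (m + k)`, and `ϖ ^ (kp)` is divisible by `ϖ ^ (m + 1)` exactly because
`m (p - 1) > p e`. As `deg Q < p`, Hensel's lemma applies to the monic `X ^ p - u⁻¹ * Q`, whose
reduction `X ^ (p - 1) * (X - c / u)` has the simple root `c / u`.
-/

open Polynomial IsLocalRing Finset

theorem Nat.exists_eq_add_of_mul_lt_mul_pred {p e m : ℕ} (hm : p * e < m * (p - 1)) :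
    ∃ k, m = e + k ∧ 0 < k ∧ e + k < k * p := by
  obtain _ | q := p
  · simp at hm
  rw [Nat.add_sub_cancel] at hm
  obtain ⟨k, rfl⟩ : ∃ k, m = e + k := Nat.exists_eq_add_of_le (by nlinarith)
  exact ⟨k, rfl, by nlinarith, by nlinarith⟩

theorem exists_add_pow_prime_eq_add_mul_sq {R : Type*} [CommRing R] {p : ℕ} (hp : p.Prime)
    (x y : R) : ∃ s, (x + y) ^ p = x ^ p + p * y * x ^ (p - 1) + p * y ^ 2 * s + y ^ p := by
  have hp2 := hp.two_le
  set c : ℕ → R := fun k ↦ ((p.choose k / p : ℕ) : R)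
  have hmem : p - 1 ∈ Ioo 0 p := mem_Ioo.2 ⟨by omega, by omega⟩
  have hlast : x ^ (p - 1 - 1) * y ^ (p - (p - 1) - 1) * c (p - 1) = x ^ (p - 2) := by
    have : p.choose (p - 1) = p := by
      rw [Nat.choose_symm (by omega), Nat.choose_one_right]
    simp [c, this, Nat.div_self hp.pos, show p - (p - 1) - 1 = 0 by omega, Nat.sub_sub]
  refine ⟨x * ∑ k ∈ (Ioo 0 p).erase (p - 1), x ^ (k - 1) * y ^ (p - k - 2) * c k, ?_⟩
  have hrest : ∑ k ∈ (Ioo 0 p).erase (p - 1), x ^ (k - 1) * y ^ (p - k - 1) * c k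
      = y * ∑ k ∈ (Ioo 0 p).erase (p - 1), x ^ (k - 1) * y ^ (p - k - 2) * c k := by
    rw [mul_sum]
    refine sum_congr rfl fun k hk ↦ ?_
    obtain ⟨hk', hk⟩ := mem_erase.1 hk
    rw [mem_Ioo] at hk
    rw [show p - k - 1 = p - k - 2 + 1 by omega, pow_succ]
    ring
  have hx : x ^ (p - 1) = x * x ^ (p - 2) := by
    rw [← pow_succ', show p - 2 + 1 = p - 1 by omega]
  rw [(Commute.all x y).add_pow_prime_eq hp, ← add_sum_erase _ _ hmem, hlast, hrest, hx]
  ring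

namespace HenselianLocalRing

variable {O : Type*} [CommRing O] [HenselianLocalRing O]

theorem exists_isRoot_of_map_eq_X_pow_mul {f : O[X]} (hf : f.Monic) {d : ℕ}
    {b : ResidueField O} (hb : b ≠ 0) (hfb : f.map (residue O) = X ^ d * (X - C b)) :
    ∃ t, f.IsRoot t ∧ residue O t = b := by
  have hensel := ((TFAE O).out 0 1).1 ‹_›
  refine hensel f hf b ?_ ?_
  · rw [aeval_def, eval₂_eq_eval_map]
    simp [ResidueField.algebraMap_eq, hfb]
  · rw [aeval_def, eval₂_eq_eval_map, ResidueField.algebraMap_eq, ← derivative_map, hfb]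
    simp [hb]

theorem exists_pow_eq_one_add_mul {n : ℕ} (hn : 0 < n) {a b c : O} (hc : IsUnit c) {Q : O[X]}
    (hQ : (X + C a) ^ n = X ^ n + C b * Q) (hQdeg : Q.degree < n)
    (hQres : Q.map (residue O) = C (residue O c) * X ^ (n - 1)) (u : Oˣ) :
    ∃ y, y ^ n = 1 + b * u := by
  set H := X ^ n - C (↑u⁻¹ : O) * Q
  have hH : H.Monic := monic_X_pow_sub ((degree_C_mul_of_isUnit u⁻¹.isUnit Q).trans_lt hQdeg)
  have hHres : H.map (residue O) = X ^ (n - 1) * (X - C (residue O (↑u⁻¹ * c))) := by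
    simp only [H, Polynomial.map_sub, Polynomial.map_pow, map_X, Polynomial.map_mul, map_C, hQres,
      map_mul]
    rw [← pow_sub_one_mul hn.ne']
    ring
  have hres : residue O (↑u⁻¹ * c) ≠ 0 := (residue_ne_zero_iff_isUnit _).2 (u⁻¹.isUnit.mul hc)
  obtain ⟨t, ht, htres⟩ := exists_isRoot_of_map_eq_X_pow_mul hH hres hHres
  obtain ⟨v, rfl⟩ : IsUnit t := (residue_ne_zero_iff_isUnit t).1 (htres ▸ hres)
  have hQv : Q.eval ↑v = u * v ^ n := by
    have hHv := ht.eq_zero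
    simp only [H, eval_sub, eval_pow, eval_X, eval_mul, eval_C] at hHv
    linear_combination (-(u : O)) * hHv - Q.eval ↑v * u.mul_inv
  have hbinom := congrArg (eval (v : O)) hQ
  simp only [eval_pow, eval_add, eval_X, eval_C, eval_mul, hQv] at hbinom
  have hpow : ((v + a) * ↑v⁻¹ : O) ^ n = ((v : O) + a) ^ n * (↑v⁻¹ : O) ^ n := mul_pow _ _ _
  have hcancel : (v : O) ^ n * (↑v⁻¹ : O) ^ n = 1 := by rw [← mul_pow, v.mul_inv, one_pow]
  exact ⟨(v + a) * ↑v⁻¹,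
    by linear_combination hpow + (↑v⁻¹ : O) ^ n * hbinom + (1 + b * u) * hcancel⟩

theorem exists_pow_eq_one_add_pow_mul [IsDomain O] {p : ℕ} (hp : p.Prime) {ϖ : O}
    (hϖ : ϖ ∈ maximalIdeal O) (hϖ0 : ϖ ≠ 0) {e m : ℕ} (c : Oˣ) (hpc : (p : O) = ϖ ^ e * c)
    (hm : p * e < m * (p - 1)) (u : Oˣ) : ∃ y, y ^ p = 1 + ϖ ^ m * u := by
  obtain ⟨k, rfl, hk, hkp⟩ := Nat.exists_eq_add_of_mul_lt_mul_pred hm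
  obtain ⟨s, hs⟩ := exists_add_pow_prime_eq_add_mul_sq hp X (C (ϖ ^ k))
  set Q := C (c : O) * X ^ (p - 1) + C (ϖ ^ k * c) * s + C (ϖ ^ (k * p - (e + k)))
  have hQ : (X + C (ϖ ^ k)) ^ p = X ^ p + C (ϖ ^ (e + k)) * Q := by
    have hkp' : ϖ ^ (k * p) = ϖ ^ (e + k) * ϖ ^ (k * p - (e + k)) := by
      rw [← pow_add]; congr 1; omega
    rw [hs, ← C_eq_natCast, hpc, ← C_pow (n := p), ← pow_mul, hkp']
    simp only [Q, map_mul, map_pow]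
    ring
  have hdeg : Q.degree < p := by
    have hdiff : C (ϖ ^ (e + k)) * Q = (X + C (ϖ ^ k)) ^ p - X ^ p := by rw [hQ]; ring
    have hmonic := (monic_X_add_C (ϖ ^ k)).pow p
    have hdegp : ((X + C (ϖ ^ k)) ^ p).degree = (p : WithBot ℕ) := by
      rw [degree_pow, degree_X_add_C, nsmul_one]
    rw [← degree_C_mul (pow_ne_zero _ hϖ0), hdiff, ← hdegp]
    refine degree_sub_lt_left (by rw [hdegp, degree_X_pow]) hmonic.ne_zero ?_
    rw [hmonic.leadingCoeff, leadingCoeff_X_pow]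
  have hres : Q.map (residue O) = C (residue O c) * X ^ (p - 1) := by
    have hϖres : residue O ϖ = 0 := (residue_eq_zero_iff ϖ).2 hϖ
    simp [Q, hϖres, zero_pow hk.ne', zero_pow (show k * p - (e + k) ≠ 0 by omega)]
  exact exists_pow_eq_one_add_mul hp.pos c.isUnit hQ hdeg hres u

end HenselianLocalRing

section IsDiscreteValuationRing

variable {O : Type*} [CommRing O] [IsDomain O] [IsDiscreteValuationRing O]

theorem Irreducible.units_mul_pow_mem_maximalIdeal_pow_iff {ϖ : O} (hϖ : Irreducible ϖ)
    (u : Oˣ) {n j : ℕ} : ↑u * ϖ ^ n ∈ maximalIdeal O ^ j ↔ j ≤ n := by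
  rw [hϖ.maximalIdeal_eq, Ideal.span_singleton_pow, Ideal.mem_span_singleton,
    Units.dvd_mul_left, pow_dvd_pow_iff hϖ.ne_zero hϖ.not_isUnit]

theorem Irreducible.exists_eq_pow_mul_units_of_mem_pow_of_notMem_pow_succ {ϖ : O}
    (hϖ : Irreducible ϖ) {x : O} {e : ℕ} (hx : x ∈ maximalIdeal O ^ e)
    (hx' : x ∉ maximalIdeal O ^ (e + 1)) : ∃ c : Oˣ, x = ϖ ^ e * c := by
  have hx0 : x ≠ 0 := by rintro rfl; exact hx' (zero_mem _)
  obtain ⟨n, c, rfl⟩ := IsDiscreteValuationRing.eq_unit_mul_pow_irreducible hx0 hϖ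
  rw [hϖ.units_mul_pow_mem_maximalIdeal_pow_iff] at hx hx'
  exact ⟨c, by rw [show n = e by omega, mul_comm]⟩

theorem IsDiscreteValuationRing.exists_pow_eq_one_add_of_mem_maximalIdeal_pow
    [HenselianLocalRing O] {p : ℕ} (hp : p.Prime) {e m : ℕ}
    (hpe : (p : O) ∈ IsLocalRing.maximalIdeal O ^ e)
    (hpe' : (p : O) ∉ IsLocalRing.maximalIdeal O ^ (e + 1)) (hm : p * e < m * (p - 1)) {x : O}
    (hx : x ∈ IsLocalRing.maximalIdeal O ^ m) : ∃ y, y ^ p = 1 + x := by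
  obtain ⟨ϖ, hϖ⟩ := exists_irreducible O
  obtain ⟨c, hc⟩ := hϖ.exists_eq_pow_mul_units_of_mem_pow_of_notMem_pow_succ hpe hpe'
  rcases eq_or_ne x 0 with rfl | hx0
  · exact ⟨1, by simp⟩
  obtain ⟨n, u, rfl⟩ := eq_unit_mul_pow_irreducible hx0 hϖ
  rw [hϖ.units_mul_pow_mem_maximalIdeal_pow_iff] at hx
  obtain ⟨y, hy⟩ := HenselianLocalRing.exists_pow_eq_one_add_pow_mul hp
    ((mem_maximalIdeal ϖ).2 hϖ.not_isUnit) hϖ.ne_zero c hc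
    (hm.trans_le (Nat.mul_le_mul_right _ hx)) u
  exact ⟨y, by rw [hy, mul_comm]⟩

end IsDiscreteValuationRing

theorem one_add_high_unit_is_pth_power_general
    (p : ℕ) (hp : p.Prime) (O : Type*) [CommRing O] [IsDomain O]
    [IsDiscreteValuationRing O] [HenselianLocalRing O]
    (e m : ℕ)
    (he : (p : O) ∈ (IsLocalRing.maximalIdeal O) ^ e ∧
          (p : O) ∉ (IsLocalRing.maximalIdeal O) ^ (e + 1))
    (hm : m * (p - 1) > p * e) :
    (∀ x ∈ (IsLocalRing.maximalIdeal O) ^ m,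
      ∃ y : FractionRing O,
        (1 : FractionRing O) + algebraMap O (FractionRing O) x = y ^ p) ∧
    (∀ u : (FractionRing O)ˣ,
      (∃ x ∈ (IsLocalRing.maximalIdeal O) ^ m,
        (u : FractionRing O) = 1 + algebraMap O (FractionRing O) x) →
      u ∈ (powMonoidHom p : (FractionRing O)ˣ →* (FractionRing O)ˣ).range) := by
  have hroot (x : O) (hx : x ∈ maximalIdeal O ^ m) :
      ∃ y : FractionRing O, 1 + algebraMap O (FractionRing O) x = y ^ p := by
    obtain ⟨y, hy⟩ :=
      IsDiscreteValuationRing.exists_pow_eq_one_add_of_mem_maximalIdeal_pow hp he.1 he.2 hm hx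
    exact ⟨algebraMap O _ y, by rw [← map_pow, hy, map_add, map_one]⟩
  refine ⟨hroot, fun u ⟨x, hx, hux⟩ ↦ ?_⟩
  obtain ⟨y, hy⟩ := hroot x hx
  have hy0 : y ≠ 0 := by
    rintro rfl
    exact u.ne_zero (by rw [hux, hy, zero_pow hp.ne_zero])
  exact ⟨Units.mk0 y hy0, Units.ext (by simp [hux, hy])⟩

/-- Let `K` be a henselian discrete valuation field of mixed
characteristic `(0, p)`, with valuation ring `O`, maximal ideal `M` and
`e = v(p)` (i.e. `p ∈ M^e \ M^{e+1}`).  If `m > e' = pe/(p-1)`, i.e.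
`m(p-1) > pe`, then every element of `1 + M^m` is a `p`-th power in `K*`;
consequently the image of `1 + M^m` in `K*/(K*)^p` is trivial. -/
theorem one_add_high_unit_is_pth_power
    (p : ℕ) (hp : p.Prime) (O : Type*) [CommRing O] [IsDomain O]
    [IsDiscreteValuationRing O] [HenselianLocalRing O]
    [CharZero (FractionRing O)] [CharP (IsLocalRing.ResidueField O) p]
    (e m : ℕ)
    (he : (p : O) ∈ (IsLocalRing.maximalIdeal O) ^ e ∧
          (p : O) ∉ (IsLocalRing.maximalIdeal O) ^ (e + 1))
    (hm : m * (p - 1) > p * e) :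
    (∀ x ∈ (IsLocalRing.maximalIdeal O) ^ m,
      ∃ y : FractionRing O,
        (1 : FractionRing O) + algebraMap O (FractionRing O) x = y ^ p) ∧
    (∀ u : (FractionRing O)ˣ,
      (∃ x ∈ (IsLocalRing.maximalIdeal O) ^ m,
        (u : FractionRing O) = 1 + algebraMap O (FractionRing O) x) →
      u ∈ (powMonoidHom p : (FractionRing O)ˣ →* (FractionRing O)ˣ).range) :=
  one_add_high_unit_is_pth_power_general p hp O e m he hm
end

section
/- Consider a commutative diagram of abelian groups where: a short exact sequence 0 → S_K → H_K → C_K → 0 maps via (res, res, res) to an exact sequence 0 → S_L → H_L → C_L with a further map (cor, cor) to 0 → S_K → H_K; the left column S_K → S_L → S_K is exact; there is a map u : A → H_K with the middle column A → H_K → H_L exact at H_K; the composite H_K → H_L → H_K is multiplication by p (so in particular a complex if all groups are p-torsion); and the image of A → H_K lands in S_K. Then the induced map C_K → C_L is injective. -/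
/-!
Take `h : H_K` whose class in `C_K` dies in `C_L`. By exactness of the bottom row, `res h`
is symbolic, `res h = s'`. Then `cor s' = cor (res h) = p • h = 0`, so by exactness of the left
column `s' = res s` with `s` symbolic over `K`. Now `h - s` lies in the kernel of restriction,
hence in the image of `u`, which is symbolic; so `h` itself is symbolic and its class vanishes.
-/

theorem mem_range_of_exact_of_forall_mem_range {S A B C : Type*} [Zero C]
    {u : A → B} {f : B → C} {i : S → B} (hexact : Function.Exact u f)
    (hu : ∀ a, ∃ s, u a = i s) {b : B} (hb : f b = 0) : b ∈ Set.range i := by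
  obtain ⟨a, rfl⟩ := (hexact b).mp hb
  obtain ⟨s, hs⟩ := hu a
  exact ⟨s, hs.symm⟩

theorem mem_range_of_map_eq_map_comp {S B S' B' : Type*} [AddGroup S] [AddGroup B]
    [AddGroup S'] [AddGroup B'] {i : S →+ B} {f : B →+ B'} {g : S →+ S'} {j : S' →+ B'}
    (hcomm : ∀ s, f (i s) = j (g s)) (hker : ∀ b, f b = 0 → b ∈ Set.range i)
    {b : B} {s : S} (hb : f b = j (g s)) : b ∈ Set.range i := by
  have hdiff : f (b - i s) = 0 := by rw [map_sub, hcomm, hb, sub_self]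
  obtain ⟨t, ht⟩ := hker _ hdiff
  exact ⟨t + s, by rw [map_add, ht, sub_add_cancel]⟩

theorem mem_range_of_map_comp_eq_zero {S₀ S' S B' B : Type*} [Zero S₀] [AddMonoid S']
    [AddMonoid S] [AddMonoid B'] [AddMonoid B] {k' : S₀ → S'} {k : S' →+ S} {j : S' →+ B'}
    {g : B' →+ B} {i : S →+ B} (hcomm : ∀ s, g (j s) = i (k s)) (hi : Function.Injective i)
    (hexact : Function.Exact k' k) {s : S'} (hs : g (j s) = 0) : s ∈ Set.range k' :=
  (hexact s).mp (hi (by rw [← hcomm, hs, map_zero]))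

theorem step_three_diagram_chase_general
    (p : ℕ)
    {SK HK CK SL HL CL A : Type*}
    [AddCommGroup SK] [AddCommGroup HK] [AddCommGroup CK]
    [AddCommGroup SL] [AddCommGroup HL] [AddCommGroup CL] [AddCommGroup A]
    (iK : SK →+ HK) (pK : HK →+ CK) (iL : SL →+ HL) (pL : HL →+ CL)
    (resS : SK →+ SL) (resH : HK →+ HL) (resC : CK →+ CL)
    (corS : SL →+ SK) (corH : HL →+ HK) (u : A →+ HK)
    -- rows
    (hiK : Function.Injective iK) (hKexact : Function.Exact iK pK)
    (hpK : Function.Surjective pK)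
    (hLexact : Function.Exact iL pL)
    -- commutativity
    (hc1 : ∀ s, resH (iK s) = iL (resS s))
    (hc2 : ∀ h, resC (pK h) = pL (resH h))
    (hc3 : ∀ s, corH (iL s) = iK (corS s))
    -- left column exact
    (hS : Function.Exact resS corS)
    -- middle column exact at H_K
    (hmid : Function.Exact u resH)
    -- cor ∘ res = p, and H_K is p-torsion
    (hcr : ∀ h : HK, corH (resH h) = p • h)
    (htor : ∀ h : HK, p • h = 0)
    -- the image of u lies in the symbolic part
    (hu : ∀ a : A, ∃ s : SK, u a = iK s) :
    Function.Injective resC := by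
  rw [injective_iff_map_eq_zero]
  intro c hc
  obtain ⟨h, rfl⟩ := hpK c
  obtain ⟨s', hs'⟩ := (hLexact (resH h)).mp (by rw [← hc2, hc])
  obtain ⟨s, rfl⟩ := mem_range_of_map_comp_eq_zero hc3 hiK hS
    (by rw [hs', hcr, htor] : corH (iL s') = 0)
  have hsymb : h ∈ Set.range iK := mem_range_of_map_eq_map_comp hc1
    (fun _ => mem_range_of_exact_of_forall_mem_range hmid hu) hs'.symm
  exact (hKexact h).mpr hsymb

/-- the diagram chase of Step III.  Given a commutative diagram of
abelian groups in which `0 → S_K → H_K → C_K → 0` is short exact, `0 → S_L → H_L → C_L`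
is exact, the column `S_K → S_L → S_K` (restriction followed by corestriction) is exact,
`A → H_K → H_L` is exact at `H_K`, the composite `H_K → H_L → H_K` is multiplication by
`p` with `H_K` `p`-torsion, and the image of `u : A → H_K` lands in `S_K`, the induced
map `C_K → C_L` is injective. -/
theorem step_three_diagram_chase
    (p : ℕ)
    {SK HK CK SL HL CL A : Type*}
    [AddCommGroup SK] [AddCommGroup HK] [AddCommGroup CK]
    [AddCommGroup SL] [AddCommGroup HL] [AddCommGroup CL] [AddCommGroup A]
    (iK : SK →+ HK) (pK : HK →+ CK) (iL : SL →+ HL) (pL : HL →+ CL)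
    (resS : SK →+ SL) (resH : HK →+ HL) (resC : CK →+ CL)
    (corS : SL →+ SK) (corH : HL →+ HK) (u : A →+ HK)
    -- rows
    (hiK : Function.Injective iK) (hKexact : Function.Exact iK pK)
    (hpK : Function.Surjective pK)
    (hiL : Function.Injective iL) (hLexact : Function.Exact iL pL)
    -- commutativity
    (hc1 : ∀ s, resH (iK s) = iL (resS s))
    (hc2 : ∀ h, resC (pK h) = pL (resH h))
    (hc3 : ∀ s, corH (iL s) = iK (corS s))
    -- left column exact
    (hS : Function.Exact resS corS)
    -- middle column exact at H_K
    (hmid : Function.Exact u resH)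
    -- cor ∘ res = p, and H_K is p-torsion
    (hcr : ∀ h : HK, corH (resH h) = p • h)
    (htor : ∀ h : HK, p • h = 0)
    -- the image of u lies in the symbolic part
    (hu : ∀ a : A, ∃ s : SK, u a = iK s) :
    Function.Injective resC :=
  step_three_diagram_chase_general p iK pK iL pL resS resH resC corS corH u hiK hKexact hpK hLexact
    hc1 hc2 hc3 hS hmid hcr htor hu
end
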